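/- Let γ > 0 and define f : (0,1) → ℝ by f(ξ) = γ·ξ·(ln(1/ξ))^{1/3}. Then lim_{ξ→0⁺} (d/dξ)[f(ξ)³·f'''(ξ)] / f'(ξ) = γ³/3. -/

import Mathlib

/-!
Write `t = log (1/ξ)`. On `(0,1)` the function `f` is `γ ξ t^{1/3}`, and each of its derivatives is a
power of `ξ` times `t^{1/3}` times a polynomial in `1/t`; in particular
`f³ f‴ = γ⁴ ξ t^{1/3} (1/3 - 10/(27 t²))`. Hence `(f³ f‴)' / f' = γ³ R(1/t)` for a rational function
`R` continuous at `0` with `R 0 = 1/3`, while `1/t → 0` as `ξ → 0⁺`.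
-/

open Real Filter Set Topology

noncomputable def negLog (x : ℝ) : ℝ := -Real.log x

noncomputable def negLogCbrt (x : ℝ) : ℝ := negLog x ^ ((1 : ℝ) / 3)

section Profile

variable (γ : ℝ)

noncomputable def profile (x : ℝ) : ℝ := γ * (x * negLogCbrt x)

noncomputable def profileDeriv (x : ℝ) : ℝ := γ * (negLogCbrt x * (1 - (3 * negLog x)⁻¹))

noncomputable def profileDeriv2 (x : ℝ) : ℝ :=
  -(γ * negLogCbrt x / x * ((3 * negLog x)⁻¹ + 2 * (9 * negLog x ^ 2)⁻¹))

noncomputable def profileDeriv3 (x : ℝ) : ℝ :=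
  γ * negLogCbrt x / x ^ 2 * ((3 * negLog x)⁻¹ - 10 * (27 * negLog x ^ 3)⁻¹)

noncomputable def profileFlux (x : ℝ) : ℝ :=
  γ ^ 4 * (x * (negLogCbrt x * (3⁻¹ - 10 * (27 * negLog x ^ 2)⁻¹)))

noncomputable def profileFluxDeriv (x : ℝ) : ℝ :=
  γ ^ 4 * negLogCbrt x *
    (3⁻¹ - (9 * negLog x)⁻¹ - 10 * (27 * negLog x ^ 2)⁻¹ - 50 * (81 * negLog x ^ 3)⁻¹)

end Profile

noncomputable def fluxRatio (u : ℝ) : ℝ :=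
  (3⁻¹ - u / 9 - 10 * u ^ 2 / 27 - 50 * u ^ 3 / 81) / (1 - u / 3)

lemma negLog_pos {x : ℝ} (hx₀ : 0 < x) (hx₁ : x < 1) : 0 < negLog x :=
  neg_pos.mpr (Real.log_neg hx₀ hx₁)

lemma tendsto_negLog_nhdsGT_zero : Tendsto negLog (𝓝[>] 0) atTop :=
  tendsto_neg_atBot_atTop.comp Real.tendsto_log_nhdsGT_zero

lemma hasDerivAt_negLog {x : ℝ} (hx : x ≠ 0) : HasDerivAt negLog (-x⁻¹) x :=
  (Real.hasDerivAt_log hx).neg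

lemma hasDerivAt_negLogCbrt {x : ℝ} (hx : x ≠ 0) (ht : 0 < negLog x) :
    HasDerivAt negLogCbrt (-(negLogCbrt x / (3 * negLog x * x))) x := by
  have h := (Real.hasDerivAt_rpow_const (p := (1 : ℝ) / 3) (Or.inl ht.ne')).comp x
    (hasDerivAt_negLog hx)
  refine h.congr_deriv ?_
  rw [negLogCbrt, show (1 : ℝ) / 3 - 1 = 1 / 3 + -1 by norm_num, Real.rpow_add ht,
    Real.rpow_neg_one]
  field_simp

lemma negLogCbrt_pow_three {x : ℝ} (ht : 0 < negLog x) : negLogCbrt x ^ 3 = negLog x := by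
  rw [negLogCbrt, ← Real.rpow_natCast, ← Real.rpow_mul ht.le]
  norm_num

lemma negLogCbrt_pos {x : ℝ} (ht : 0 < negLog x) : 0 < negLogCbrt x :=
  Real.rpow_pos_of_pos ht _

section Derivatives

variable (γ : ℝ) {x : ℝ}

lemma hasDerivAt_profile (hx : x ≠ 0) (ht : 0 < negLog x) :
    HasDerivAt (profile γ) (profileDeriv γ x) x := by
  refine (((hasDerivAt_id x).mul (hasDerivAt_negLogCbrt hx ht)).const_mul γ).congr_deriv ?_
  simp only [profileDeriv, id]
  field_simp
  ring

lemma hasDerivAt_profileDeriv (hx : x ≠ 0) (ht : 0 < negLog x) :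
    HasDerivAt (profileDeriv γ) (profileDeriv2 γ x) x := by
  have hinv := ((hasDerivAt_negLog hx).const_mul 3).inv (by positivity)
  refine (((hasDerivAt_negLogCbrt hx ht).mul ((hasDerivAt_const x 1).sub hinv)).const_mul
    γ).congr_deriv ?_
  simp only [profileDeriv2, Pi.sub_apply, Pi.inv_apply]
  field_simp
  ring

lemma hasDerivAt_profileDeriv2 (hx : x ≠ 0) (ht : 0 < negLog x) :
    HasDerivAt (profileDeriv2 γ) (profileDeriv3 γ x) x := by
  have hA := ((hasDerivAt_negLogCbrt hx ht).const_mul γ).div (hasDerivAt_id x) hx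
  have hB := ((hasDerivAt_negLog hx).const_mul 3).inv (by positivity) |>.add
    ((((hasDerivAt_negLog hx).pow 2).const_mul 9).inv (by simp [ht.ne']) |>.const_mul 2)
  refine (hA.mul hB).neg.congr_deriv ?_
  simp only [profileDeriv3, Pi.add_apply, Pi.inv_apply, Pi.div_apply, Pi.pow_apply, id]
  field_simp
  ring

lemma hasDerivAt_profileFlux (hx : x ≠ 0) (ht : 0 < negLog x) :
    HasDerivAt (profileFlux γ) (profileFluxDeriv γ x) x := by
  have hC := (hasDerivAt_const x (3 : ℝ)⁻¹).sub
    ((((hasDerivAt_negLog hx).pow 2).const_mul 27).inv (by simp [ht.ne']) |>.const_mul 10)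
  refine (((hasDerivAt_id x).mul ((hasDerivAt_negLogCbrt hx ht).mul hC)).const_mul
    (γ ^ 4)).congr_deriv ?_
  simp only [profileFluxDeriv, Pi.sub_apply, Pi.mul_apply, Pi.inv_apply, Pi.pow_apply, id]
  field_simp
  ring

lemma profile_pow_three_mul_profileDeriv3 (hx : x ≠ 0) (ht : 0 < negLog x) :
    profile γ x ^ 3 * profileDeriv3 γ x = profileFlux γ x := by
  have hcube : profile γ x ^ 3 = γ ^ 3 * x ^ 3 * negLog x := by
    rw [profile, mul_pow, mul_pow, negLogCbrt_pow_three ht, mul_assoc]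
  rw [hcube, profileDeriv3, profileFlux]
  field_simp

lemma profileFluxDeriv_div_profileDeriv (hγ : γ ≠ 0) (ht : 1 < negLog x) :
    profileFluxDeriv γ x / profileDeriv γ x = γ ^ 3 * fluxRatio (negLog x)⁻¹ := by
  have hp := (negLogCbrt_pos (x := x) (by linarith)).ne'
  have h3 : 3 * negLog x - 1 ≠ 0 := by linarith
  rw [profileFluxDeriv, profileDeriv, fluxRatio]
  field_simp

end Derivatives

lemma tendsto_fluxRatio : Tendsto fluxRatio (𝓝 0) (𝓝 3⁻¹) := by
  have h : ContinuousAt fluxRatio 0 := by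
    unfold fluxRatio
    exact ContinuousAt.div (by fun_prop) (by fun_prop) (by norm_num)
  simpa [fluxRatio] using h.tendsto

/-- For `γ > 0` and `f(ξ) = γ ξ (ln(1/ξ))^{1/3}` on `(0,1)`,
`lim_{ξ→0⁺} (f³ f''')'(ξ) / f'(ξ) = γ³/3`. -/
theorem stmt_7 (γ : ℝ) (hγ : 0 < γ)
    (f : ℝ → ℝ) (hf : ∀ ξ ∈ Set.Ioo (0:ℝ) 1, f ξ = γ * ξ * (Real.log (1/ξ)) ^ ((1:ℝ)/3)) :
    Tendsto (fun ξ => deriv (fun x => (f x)^3 * iteratedDeriv 3 f x) ξ / deriv f ξ)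
      (𝓝[>] 0) (𝓝 (γ^3 / 3)) := by
  have hpos : ∀ x ∈ Ioo (0 : ℝ) 1, 0 < negLog x := fun x hx => negLog_pos hx.1 hx.2
  have h0 : EqOn f (profile γ) (Ioo 0 1) := fun x hx => by
    rw [hf x hx, profile, negLogCbrt, negLog, one_div, Real.log_inv, mul_assoc]
  have h1 : EqOn (deriv f) (profileDeriv γ) (Ioo 0 1) :=
    (h0.deriv isOpen_Ioo).trans fun x hx => (hasDerivAt_profile γ hx.1.ne' (hpos x hx)).deriv
  have h2 : EqOn (deriv (deriv f)) (profileDeriv2 γ) (Ioo 0 1) :=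
    (h1.deriv isOpen_Ioo).trans fun x hx => (hasDerivAt_profileDeriv γ hx.1.ne' (hpos x hx)).deriv
  have h3 : EqOn (iteratedDeriv 3 f) (profileDeriv3 γ) (Ioo 0 1) := by
    rw [iteratedDeriv_eq_iterate]
    exact (h2.deriv isOpen_Ioo).trans fun x hx =>
      (hasDerivAt_profileDeriv2 γ hx.1.ne' (hpos x hx)).deriv
  have hflux : EqOn (fun x => f x ^ 3 * iteratedDeriv 3 f x) (profileFlux γ) (Ioo 0 1) :=
    fun x hx => by
      dsimp only
      rw [h0 hx, h3 hx, profile_pow_three_mul_profileDeriv3 γ hx.1.ne' (hpos x hx)]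
  have h4 : EqOn (deriv fun x => f x ^ 3 * iteratedDeriv 3 f x) (profileFluxDeriv γ) (Ioo 0 1) :=
    (hflux.deriv isOpen_Ioo).trans fun x hx => (hasDerivAt_profileFlux γ hx.1.ne' (hpos x hx)).deriv
  have hlim : Tendsto (fun x => γ ^ 3 * fluxRatio (negLog x)⁻¹) (𝓝[>] 0) (𝓝 (γ ^ 3 / 3)) :=
    (tendsto_fluxRatio.comp (tendsto_inv_atTop_zero.comp tendsto_negLog_nhdsGT_zero)).const_mul
      (γ ^ 3)
  refine hlim.congr' ?_
  filter_upwards [Ioo_mem_nhdsGT one_pos, tendsto_negLog_nhdsGT_zero.eventually_gt_atTop 1]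
    with x hx ht
  rw [h4 hx, h1 hx, profileFluxDeriv_div_profileDeriv γ hγ.ne' ht]
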